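/- Suppose a system is dissipative with quadratic supply rate s(y,u) = [y;u]ᵀ Π [y;u], where Π has blocks Π_yy, Π_yu, Π_uu, and the storage function V is nonnegative with V(x_0)=0. If there exist positive reals α, β with I + α Π_yy ≺ 0 and the block matrix [[I + α Π_yy, α Π_yu],[α Π_yuᵀ, α Π_uu − β I]] ⪯ 0, then for every T, Σ_{t<T} ‖y_t‖² ≤ β Σ_{t<T} ‖u_t‖², i.e., the L₂ gain over [0,T) is at most √β. -/

import Mathlib

/-!
Testing the block inequality against `[y_t; u_t]` gives, at every time,
`‖y_t‖² + α s(y_t, u_t) ≤ β ‖u_t‖²`, because the block matrix is `diag(I, -βI) + α Π`.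
Summing over `t < T`, the supply terms add up to at least `V(x_T) - V(x_0) ≥ 0`, and `α > 0`.
-/

open Finset Matrix

theorem sub_le_sum_range_of_sub_le {M : Type*} [AddCommGroup M] [PartialOrder M]
    [IsOrderedAddMonoid M] {f s : ℕ → M} (h : ∀ t, f (t + 1) - f t ≤ s t) (T : ℕ) :
    f T - f 0 ≤ ∑ t ∈ range T, s t := by
  rw [← sum_range_sub]
  exact sum_le_sum fun t _ => h t

theorem fromBlocks_one_add_smul {ι κ R : Type*} [DecidableEq ι] [DecidableEq κ] [Ring R]
    (A : Matrix ι ι R) (B : Matrix ι κ R) (C : Matrix κ ι R) (D : Matrix κ κ R) (α β : R) :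
    fromBlocks (1 + α • A) (α • B) (α • C) (α • D - β • 1) =
      fromBlocks 1 0 0 (-β • 1) + α • fromBlocks A B C D := by
  rw [fromBlocks_smul, fromBlocks_add, zero_add, zero_add, neg_smul, neg_add_eq_sub]

theorem sumElim_dotProduct_fromBlocks_one_zero_zero_smul_one_mulVec {ι κ R : Type*}
    [Fintype ι] [Fintype κ] [DecidableEq ι] [DecidableEq κ] [CommRing R]
    (a : ι → R) (b : κ → R) (c : R) :
    Sum.elim a b ⬝ᵥ fromBlocks 1 0 0 (c • 1) *ᵥ Sum.elim a b = a ⬝ᵥ a + c * (b ⬝ᵥ b) := by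
  simp [fromBlocks_mulVec, sumElim_dotProduct_sumElim, smul_mulVec, dotProduct_smul]

theorem dotProduct_add_mul_supply_le_of_posSemidef {ι κ : Type*} [Fintype ι] [Fintype κ]
    [DecidableEq ι] [DecidableEq κ] {A : Matrix ι ι ℝ} {B : Matrix ι κ ℝ} {D : Matrix κ κ ℝ}
    {α β : ℝ} (h : (-(fromBlocks (1 + α • A) (α • B) (α • Bᵀ) (α • D - β • 1))).PosSemidef)
    (a : ι → ℝ) (b : κ → ℝ) :
    a ⬝ᵥ a + α * (Sum.elim a b ⬝ᵥ fromBlocks A B Bᵀ D *ᵥ Sum.elim a b) ≤ β * (b ⬝ᵥ b) := by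
  have hq := h.dotProduct_mulVec_nonneg (Sum.elim a b)
  rw [fromBlocks_one_add_smul, neg_mulVec, dotProduct_neg, star_trivial, add_mulVec,
    dotProduct_add, smul_mulVec, dotProduct_smul, smul_eq_mul,
    sumElim_dotProduct_fromBlocks_one_zero_zero_smul_one_mulVec] at hq
  linarith

theorem l2_gain_of_dissipative_general {n p m : ℕ}
    (x : ℕ → Fin n → ℝ) (y : ℕ → Fin p → ℝ) (u : ℕ → Fin m → ℝ)
    (V : (Fin n → ℝ) → ℝ)
    (Pyy : Matrix (Fin p) (Fin p) ℝ) (Pyu : Matrix (Fin p) (Fin m) ℝ)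
    (Puu : Matrix (Fin m) (Fin m) ℝ)
    (hVnonneg : ∀ ξ, 0 ≤ V ξ) (hV0 : V (x 0) = 0)
    (hdiss : ∀ t : ℕ,
      V (x (t + 1)) - V (x t) ≤
        (Sum.elim (y t) (u t)) ⬝ᵥ
          (Matrix.fromBlocks Pyy Pyu Pyuᵀ Puu).mulVec (Sum.elim (y t) (u t)))
    (α β : ℝ) (hα : 0 < α)
    (hblock : (-(Matrix.fromBlocks (1 + α • Pyy) (α • Pyu)
        (α • Pyuᵀ) (α • Puu - β • 1))).PosSemidef) :
    ∀ T : ℕ, ∑ t ∈ range T, (y t) ⬝ᵥ (y t) ≤ β * ∑ t ∈ range T, (u t) ⬝ᵥ (u t) := by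
  intro T
  set s : ℕ → ℝ := fun t ↦
    Sum.elim (y t) (u t) ⬝ᵥ fromBlocks Pyy Pyu Pyuᵀ Puu *ᵥ Sum.elim (y t) (u t)
  have hsupply : 0 ≤ ∑ t ∈ range T, s t := by
    have := sub_le_sum_range_of_sub_le (f := fun t ↦ V (x t)) hdiss T
    linarith [hVnonneg (x T)]
  calc ∑ t ∈ range T, y t ⬝ᵥ y t
      ≤ ∑ t ∈ range T, y t ⬝ᵥ y t + α * ∑ t ∈ range T, s t :=
        le_add_of_nonneg_right (mul_nonneg hα.le hsupply)
    _ = ∑ t ∈ range T, (y t ⬝ᵥ y t + α * s t) := by rw [sum_add_distrib, mul_sum]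
    _ ≤ ∑ t ∈ range T, β * (u t ⬝ᵥ u t) :=
        sum_le_sum fun t _ ↦ dotProduct_add_mul_supply_le_of_posSemidef hblock (y t) (u t)
    _ = β * ∑ t ∈ range T, u t ⬝ᵥ u t := (mul_sum _ _ _).symm

/-- L₂-gain bound from quadratic dissipativity: if the system is dissipative with quadratic
supply rate given by the symmetric block matrix `Π = [[Πyy, Πyu],[Πyuᵀ, Πuu]]`, the storage
is nonnegative with `V (x 0) = 0`, and there exist `α, β > 0` with `I + α Πyy ≺ 0` and
`[[I + α Πyy, α Πyu],[α Πyuᵀ, α Πuu − β I]] ⪯ 0`, then `Σ_{t<T} ‖y_t‖² ≤ β Σ_{t<T} ‖u_t‖²`. -/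
theorem l2_gain_of_dissipative {n p m : ℕ}
    (x : ℕ → Fin n → ℝ) (y : ℕ → Fin p → ℝ) (u : ℕ → Fin m → ℝ)
    (V : (Fin n → ℝ) → ℝ)
    (Pyy : Matrix (Fin p) (Fin p) ℝ) (Pyu : Matrix (Fin p) (Fin m) ℝ)
    (Puu : Matrix (Fin m) (Fin m) ℝ)
    (hPyy : Pyy.IsSymm) (hPuu : Puu.IsSymm)
    (hVnonneg : ∀ ξ, 0 ≤ V ξ) (hV0 : V (x 0) = 0)
    (hdiss : ∀ t : ℕ,
      V (x (t + 1)) - V (x t) ≤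
        (Sum.elim (y t) (u t)) ⬝ᵥ
          (Matrix.fromBlocks Pyy Pyu Pyuᵀ Puu).mulVec (Sum.elim (y t) (u t)))
    (α β : ℝ) (hα : 0 < α) (hβ : 0 < β)
    (hneg : (-(1 + α • Pyy)).PosDef)
    (hblock : (-(Matrix.fromBlocks (1 + α • Pyy) (α • Pyu)
        (α • Pyuᵀ) (α • Puu - β • 1))).PosSemidef) :
    ∀ T : ℕ, ∑ t ∈ range T, (y t) ⬝ᵥ (y t) ≤ β * ∑ t ∈ range T, (u t) ⬝ᵥ (u t) :=
  l2_gain_of_dissipative_general x y u V Pyy Pyu Puu hVnonneg hV0 hdiss α β hα hblock
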